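/- Define d on the vertices of L_{k,n} by d(A,B) = 2⌈(k - |A∩B|)/(n-2k)⌉ + 1 if |A| ≠ |B|, and d(A,B) = 2⌈(|A| - |A∩B|)/(n-2k)⌉ if |A| = |B|. Then d is a metric on the vertex set (d(A,B)=0 iff A=B; d symmetric; triangle inequality) and d(A,B) = 1 if and only if A and B are adjacent in L_{k,n}. -/

import Mathlib

/-- Vertices of the level graph: k-element and (n-k)-element subsets of {1,…,n}. -/
def LevelVert (n k : ℕ) := {A : Finset (Fin n) // A.card = k ∨ A.card = n - k}

/-- The (k,n)-level graph L_{k,n}. -/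
def levelGraph (n k : ℕ) : SimpleGraph (LevelVert n k) where
  Adj A B := A ≠ B ∧
    ((A.1.card = k ∧ B.1.card = n - k ∧ A.1 ⊆ B.1) ∨
     (B.1.card = k ∧ A.1.card = n - k ∧ B.1 ⊆ A.1))
  symm := by refine ⟨fun A B h => ?_⟩; exact ⟨Ne.symm h.1, h.2.elim Or.inr Or.inl⟩
  loopless := by refine ⟨fun A h => ?_⟩; exact h.1 rfl

/-- The initial vertex P = {1,…,k} (as a subset of Fin n). -/
def Pset (n k : ℕ) : Finset (Fin n) := Finset.univ.filter (fun x => (x : ℕ) < k)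

/-- The distance function d on vertices of the level graph. -/
def dFun (n k : ℕ) (A B : LevelVert n k) : ℕ :=
  if A.1.card = B.1.card then
    2 * ((A.1.card - (A.1 ∩ B.1).card + (n - 2 * k) - 1) / (n - 2 * k))
  else
    2 * ((k - (A.1 ∩ B.1).card + (n - 2 * k) - 1) / (n - 2 * k)) + 1


/-!
Write `m = n - 2k > 0` and call `min |A| |B| - |A ∩ B|` the defect of two vertices; it vanishes
exactly when `A` and `B` are nested. Then `d(A, B) = 2 ⌈defect / m⌉ + [|A| ≠ |B|]`, so `d` is `0`
(resp. `1`) exactly for nested vertices of equal (resp. different) size. The triangle inequality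
follows from `|A ∩ B| + |B ∩ C| ≤ |A ∩ C| + |B|` and subadditivity of `⌈· / m⌉`: the only case in
which the defects themselves fail to be subadditive is when `B` has the other size than `A` and
`C`, and then the two odd terms of `d(A, B) + d(B, C)` pay for the missing `m`.
-/

open Finset

lemma Nat.ceilDiv_le_add_add_of_le {m x y z s : ℕ} (hm : 0 < m) (h : x ≤ y + z + m * s) :
    x ⌈/⌉ m ≤ y ⌈/⌉ m + z ⌈/⌉ m + s := by
  rw [ceilDiv_le_iff_le_mul hm]
  calc x ≤ y + z + m * s := h
    _ ≤ m * (y ⌈/⌉ m) + m * (z ⌈/⌉ m) + m * s := by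
        gcongr <;> exact le_smul_ceilDiv hm
    _ = m * (y ⌈/⌉ m + z ⌈/⌉ m + s) := by ring

lemma Nat.ceilDiv_eq_zero_iff {m x : ℕ} (hm : 0 < m) : x ⌈/⌉ m = 0 ↔ x = 0 := by
  rw [← Nat.le_zero, ceilDiv_le_iff_le_mul hm, mul_zero, Nat.le_zero]

namespace Finset

variable {α : Type*} [DecidableEq α]

lemma card_inter_add_card_inter_le (A B C : Finset α) :
    #(A ∩ B) + #(B ∩ C) ≤ #(A ∩ C) + #B := by
  rw [← card_inter_add_card_union]
  refine add_le_add (card_le_card fun x => ?_) (card_le_card ?_)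
  · simp only [mem_inter]; tauto
  · exact union_subset inter_subset_right inter_subset_left

lemma min_card_sub_card_inter_eq_zero_iff {A B : Finset α} :
    min #A #B - #(A ∩ B) = 0 ↔ A ⊆ B ∨ B ⊆ A := by
  have hA : #(A ∩ B) ≤ #A := card_le_card inter_subset_left
  have hB : #(A ∩ B) ≤ #B := card_le_card inter_subset_right
  rw [← inter_eq_left, ← inter_eq_right]
  constructor
  · intro h
    rcases min_cases #A #B with ⟨hmin, -⟩ | ⟨hmin, -⟩ <;> rw [hmin] at h
    · exact .inl (eq_of_subset_of_card_le inter_subset_left (by omega))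
    · exact .inr (eq_of_subset_of_card_le inter_subset_right (by omega))
  · rintro (h | h) <;> rw [h] <;> omega

end Finset

namespace LevelVert

variable {n k : ℕ}

def defect (A B : LevelVert n k) : ℕ := min A.1.card B.1.card - (A.1 ∩ B.1).card

lemma defect_eq_zero_iff {A B : LevelVert n k} : defect A B = 0 ↔ A.1 ⊆ B.1 ∨ B.1 ⊆ A.1 :=
  min_card_sub_card_inter_eq_zero_iff

lemma card_eq_of_subset_of_card_ne {A B : LevelVert n k} (hk : k ≤ n - k) (hAB : A.1 ⊆ B.1)
    (hne : A.1.card ≠ B.1.card) : A.1.card = k ∧ B.1.card = n - k := by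
  have := card_le_card hAB
  rcases A.2 with hA | hA <;> rcases B.2 with hB | hB <;> omega

lemma dFun_eq_ceilDiv_defect (hk : k ≤ n - k) (A B : LevelVert n k) :
    dFun n k A B = 2 * (defect A B ⌈/⌉ (n - 2 * k)) + if A.1.card = B.1.card then 0 else 1 := by
  unfold dFun defect
  split_ifs with h
  · rw [h, min_self, Nat.ceilDiv_eq_add_pred_div, add_zero]
  · have hmin : min A.1.card B.1.card = k := by
      rcases A.2 with hA | hA <;> rcases B.2 with hB | hB <;> omega
    rw [hmin, Nat.ceilDiv_eq_add_pred_div]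

lemma dFun_comm (A B : LevelVert n k) : dFun n k A B = dFun n k B A := by
  by_cases h : A.1.card = B.1.card
  · simp [dFun, h, inter_comm]
  · simp [dFun, h, Ne.symm h, inter_comm]

lemma dFun_eq_zero_iff (hk : k < n - k) {A B : LevelVert n k} : dFun n k A B = 0 ↔ A = B := by
  have hm : 0 < n - 2 * k := by omega
  rw [dFun_eq_ceilDiv_defect hk.le, show A = B ↔ A.1 = B.1 from ⟨congrArg _, Subtype.ext⟩]
  by_cases hcard : A.1.card = B.1.card
  · rw [if_pos hcard, add_zero, Nat.mul_eq_zero, Nat.ceilDiv_eq_zero_iff hm, defect_eq_zero_iff]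
    constructor
    · rintro (h | h | h)
      · omega
      · exact eq_of_subset_of_card_le h hcard.ge
      · exact (eq_of_subset_of_card_le h hcard.le).symm
    · exact fun h => .inr (.inl h.le)
  · rw [if_neg hcard]
    exact iff_of_false (by omega) fun h => hcard (congrArg card h)

lemma dFun_eq_one_iff (hk : k < n - k) {A B : LevelVert n k} :
    dFun n k A B = 1 ↔ (levelGraph n k).Adj A B := by
  have hm : 0 < n - 2 * k := by omega
  rw [dFun_eq_ceilDiv_defect hk.le]
  by_cases hcard : A.1.card = B.1.card
  · rw [if_pos hcard]
    refine iff_of_false (by omega) ?_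
    rintro ⟨-, ⟨hA, hB, -⟩ | ⟨hB, hA, -⟩⟩ <;> omega
  · rw [if_neg hcard, Nat.add_eq_right, Nat.mul_eq_zero, Nat.ceilDiv_eq_zero_iff hm,
      defect_eq_zero_iff]
    constructor
    · rintro (h | h | h)
      · omega
      · obtain ⟨hA, hB⟩ := card_eq_of_subset_of_card_ne hk.le h hcard
        exact ⟨fun e => hcard (e ▸ rfl), .inl ⟨hA, hB, h⟩⟩
      · obtain ⟨hB, hA⟩ := card_eq_of_subset_of_card_ne hk.le h (Ne.symm hcard)
        exact ⟨fun e => hcard (e ▸ rfl), .inr ⟨hB, hA, h⟩⟩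
    · rintro ⟨-, ⟨-, -, h⟩ | ⟨-, -, h⟩⟩
      exacts [.inr (.inl h), .inr (.inr h)]

lemma dFun_triangle (hk : k < n - k) (A B C : LevelVert n k) :
    dFun n k A C ≤ dFun n k A B + dFun n k B C := by
  have hm : 0 < n - 2 * k := by omega
  have hdefect : defect A C ≤ defect A B + defect B C +
      (n - 2 * k) * if A.1.card = C.1.card ∧ A.1.card ≠ B.1.card then 1 else 0 := by
    have := card_inter_add_card_inter_le A.1 B.1 C.1
    unfold defect
    rcases A.2 with hA | hA <;> rcases B.2 with hB | hB <;> rcases C.2 with hC | hC <;>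
      split_ifs <;> omega
  have hceil := Nat.ceilDiv_le_add_add_of_le hm hdefect
  rw [dFun_eq_ceilDiv_defect hk.le, dFun_eq_ceilDiv_defect hk.le, dFun_eq_ceilDiv_defect hk.le]
  split_ifs at hceil ⊢ <;> omega

end LevelVert

theorem dFun_metric (n k : ℕ) (hk : k < n - k) :
    (∀ A B : LevelVert n k, dFun n k A B = 0 ↔ A = B) ∧
    (∀ A B : LevelVert n k, dFun n k A B = dFun n k B A) ∧
    (∀ A B C : LevelVert n k, dFun n k A B + dFun n k B C ≥ dFun n k A C) ∧
    (∀ A B : LevelVert n k, dFun n k A B = 1 ↔ (levelGraph n k).Adj A B) :=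
  ⟨fun _ _ => LevelVert.dFun_eq_zero_iff hk, LevelVert.dFun_comm,
    LevelVert.dFun_triangle hk, fun _ _ => LevelVert.dFun_eq_one_iff hk⟩
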